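/- arXiv:2104.00711 — 5 statements merged into one kernel-verified Lean document; each statement's English description precedes it below -/
import Mathlib

section
/- If α ∈ [0,1], k ∈ ℤ, and x ∈ [0,1/2) satisfy ‖kα‖ > x and ‖(k+1)α‖ > x (where ‖·‖ denotes distance to the nearest integer), then kα mod 1 ∈ [1−α,1) if and only if (kα + x) mod 1 ∈ [1−α,1), and likewise for kα − x. -/
/-- Distance of a real number to the nearest integer. -/
noncomputable def distInt (t : ℝ) : ℝ := |t - round t|

lemma distInt_eq_min (t : ℝ) : distInt t = min (Int.fract t) (1 - Int.fract t) :=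
  abs_sub_round_eq_min t

theorem stmt0 (α : ℝ) (hα : α ∈ Set.Icc (0:ℝ) 1) (k : ℤ) (x : ℝ)
    (hx : x ∈ Set.Ico (0:ℝ) (1/2))
    (h1 : distInt (k * α) > x) (h2 : distInt ((k + 1) * α) > x) :
    (Int.fract (k * α) ∈ Set.Ico (1 - α) 1 ↔
      Int.fract (k * α + x) ∈ Set.Ico (1 - α) 1) ∧
    (Int.fract (k * α) ∈ Set.Ico (1 - α) 1 ↔
      Int.fract (k * α - x) ∈ Set.Ico (1 - α) 1) := by
  obtain ⟨hα0, hα1⟩ := hα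
  obtain ⟨hx0, hx2⟩ := hx
  set f := Int.fract (k * α) with hf
  have hf0 : 0 ≤ f := Int.fract_nonneg _
  have hf1 : f < 1 := Int.fract_lt_one _
  rw [distInt_eq_min] at h1 h2
  simp only [gt_iff_lt, lt_inf_iff] at h1 h2
  obtain ⟨hxf, hxf'⟩ := h1
  -- fract (kα + x) = f + x
  have e1 : Int.fract (k * α + x) = f + x := by
    have : (k:ℝ) * α + x = ⌊(k:ℝ) * α⌋ + (f + x) := by
      rw [hf, Int.fract]; ring
    rw [this, Int.fract_intCast_add, Int.fract_eq_self.2 ⟨by linarith, by linarith⟩]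
  have e2 : Int.fract (k * α - x) = f - x := by
    have : (k:ℝ) * α - x = ⌊(k:ℝ) * α⌋ + (f - x) := by
      rw [hf, Int.fract]; ring
    rw [this, Int.fract_intCast_add, Int.fract_eq_self.2 ⟨by linarith, by linarith⟩]
  -- dichotomy from h2
  have e3 : ((k:ℝ) + 1) * α = ⌊(k:ℝ) * α⌋ + (f + α) := by
    rw [hf, Int.fract]; ring
  have hdich : f < 1 - α - x ∨ f > 1 - α + x := by
    rcases lt_or_ge (f + α) 1 with h | h
    · left
      have : Int.fract (((k:ℝ) + 1) * α) = f + α := by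
        rw [e3, Int.fract_intCast_add, Int.fract_eq_self.2 ⟨by linarith, h⟩]
      rw [this] at h2; linarith [h2.2]
    · right
      have : Int.fract (((k:ℝ) + 1) * α) = f + α - 1 := by
        rw [e3, Int.fract_intCast_add]
        have hmem : f + α - 1 ∈ Set.Ico (0:ℝ) 1 := ⟨by linarith, by linarith⟩
        have e4 : Int.fract (f + α) = Int.fract (f + α - 1) := by
          rw [show f + α - 1 = f + α + (-1 : ℤ) by push_cast; ring, Int.fract_add_intCast]
        rw [e4, Int.fract_eq_self.2 hmem]
      rw [this] at h2; linarith [h2.1]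
  push_cast at e1 e2 e3 hdich ⊢
  rw [e1, e2]
  rcases hdich with h | h
  · constructor <;> constructor <;> intro hm <;>
      exact absurd hm.1 (by simp only [Set.mem_Ico, not_le]; linarith)
  · constructor <;> constructor <;> intro _ <;>
      exact ⟨by linarith, by linarith⟩
end

section
/- Let α ∈ [0,1] be irrational with convergents p_n/q_n, n ≥ 2, and let v_α(k) = χ_{[1−α,1)}(kα mod 1). Then for all integers k with 1 ≤ k ≤ q_n − 2, we have v_{α_n}(k) = v_α(k), where α_n = p_n/q_n and v_{α_n}(k) = χ_{[1−α_n,1)}(kα_n mod 1). -/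
/-- The Sturmian word `v_β(n) = χ_{[1−β,1)}(nβ mod 1)` for slope `β`. -/
noncomputable def sturmian (β : ℝ) (n : ℤ) : ℝ :=
  if Int.fract (n * β) ∈ Set.Ico (1 - β) 1 then 1 else 0

/-!
If `P/Q` is in lowest terms and `|α - P/Q| ≤ 1/Q²`, then for `0 < m < Q` the number `mP/Q`
lies at distance at least `1/Q` from every integer, while `|mα - mP/Q| ≤ m/Q² < 1/Q`; hence
`⌊mα⌋ = ⌊mP/Q⌋`. The letter `v_β(k)` is `1` exactly when `⌊(k+1)β⌋ > ⌊kβ⌋`, so it only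
depends on these floors at `m = k` and `m = k + 1`. The convergent `p_n/q_n` is such a
fraction, by the determinant formula and `|α - p_n/q_n| ≤ 1/(q_n q_{n+1})` with
`q_n ≤ q_{n+1}`.
-/
open GenContFract (of)

theorem fract_mem_Ico_one_sub_iff (x β : ℝ) :
    Int.fract x ∈ Set.Ico (1 - β) 1 ↔ ⌊x⌋ + 1 ≤ ⌊x + β⌋ := by
  rw [Int.le_floor, Set.mem_Ico, Int.fract]
  push_cast
  constructor
  · rintro ⟨h, -⟩
    linarith
  · intro h
    exact ⟨by linarith, Int.fract_lt_one x⟩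

theorem sturmian_eq_of_floor_eq {β γ : ℝ} {k : ℤ} (h₀ : ⌊k * β⌋ = ⌊k * γ⌋)
    (h₁ : ⌊((k + 1 : ℤ) : ℝ) * β⌋ = ⌊((k + 1 : ℤ) : ℝ) * γ⌋) :
    sturmian β k = sturmian γ k := by
  push_cast at h₁
  simp only [sturmian, fract_mem_Ico_one_sub_iff, ← add_one_mul, h₀, h₁]

section FloorApprox

variable {K : Type*} [Field K] [LinearOrder K] [IsStrictOrderedRing K] [FloorRing K]

theorem floor_eq_ediv_of_abs_sub_lt {N Q : ℤ} (hQ : 0 < Q) (hN : ¬ Q ∣ N) {y : K}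
    (hy : |y - N / Q| < 1 / Q) : ⌊y⌋ = N / Q := by
  have hQ' : (0 : K) < Q := by exact_mod_cast hQ
  have hr : 0 < N % Q := lt_of_le_of_ne (Int.emod_nonneg N hQ.ne')
    (fun h => hN (Int.dvd_of_emod_eq_zero h.symm))
  have hrQ : N % Q < Q := Int.emod_lt_of_pos N hQ
  have hNdr : (N : K) = Q * (N / Q : ℤ) + (N % Q : ℤ) := by
    exact_mod_cast (Int.mul_ediv_add_emod N Q).symm
  have hr' : (1 : K) ≤ (N % Q : ℤ) := by exact_mod_cast hr
  have hrQ' : ((N % Q : ℤ) : K) + 1 ≤ Q := by exact_mod_cast hrQ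
  have hyQ : |y * Q - N| < 1 := calc
    |y * Q - N| = |y - N / Q| * Q := by
      rw [← abs_of_pos hQ', ← abs_mul, abs_of_pos hQ', sub_mul, div_mul_cancel₀ _ hQ'.ne']
    _ < 1 / Q * Q := by gcongr
    _ = 1 := one_div_mul_cancel hQ'.ne'
  obtain ⟨hlo, hhi⟩ := abs_sub_lt_iff.mp hyQ
  rw [Int.floor_eq_iff]
  constructor <;> nlinarith

theorem floor_eq_floor_of_abs_sub_lt {N Q : ℤ} (hQ : 0 < Q) (hN : ¬ Q ∣ N) {y : K}
    (hy : |y - N / Q| < 1 / Q) : ⌊y⌋ = ⌊(N : K) / Q⌋ := by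
  have hQ' : (0 : K) < Q := by exact_mod_cast hQ
  rw [floor_eq_ediv_of_abs_sub_lt hQ hN hy,
    floor_eq_ediv_of_abs_sub_lt hQ hN (by simpa using hQ')]

theorem floor_mul_eq_of_abs_sub_le {x : K} {P Q : ℤ} (hPQ : IsCoprime P Q)
    (hx : |x - P / Q| ≤ 1 / Q ^ 2) {m : ℤ} (hm : 0 < m) (hmQ : m < Q) :
    ⌊m * x⌋ = ⌊m * (P / Q : K)⌋ := by
  have hQ : (0 : K) < Q := by exact_mod_cast hm.trans hmQ
  have hm' : (0 : K) < m := by exact_mod_cast hm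
  have hmQ' : (m : K) < Q := by exact_mod_cast hmQ
  have hndvd : ¬ Q ∣ m * P := fun h =>
    hmQ.not_ge (Int.le_of_dvd hm (hPQ.symm.dvd_of_dvd_mul_right h))
  have hclose : |m * x - ((m * P : ℤ) : K) / Q| < 1 / Q := calc
    |m * x - ((m * P : ℤ) : K) / Q| = m * |x - P / Q| := by
      rw [← abs_of_pos hm', ← abs_mul, abs_of_pos hm']
      push_cast
      ring_nf
    _ ≤ m * (1 / Q ^ 2) := by gcongr
    _ < Q * (1 / Q ^ 2) := by gcongr
    _ = 1 / Q := by field_simp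
  rw [floor_eq_floor_of_abs_sub_lt (hm.trans hmQ) hndvd hclose]
  push_cast
  rw [mul_div_assoc]

end FloorApprox

theorem sturmian_eq_of_abs_sub_le {α : ℝ} {P Q : ℤ} (hPQ : IsCoprime P Q)
    (hα : |α - P / Q| ≤ 1 / Q ^ 2) {k : ℤ} (hk : 0 < k) (hkQ : k + 1 < Q) :
    sturmian (P / Q) k = sturmian α k :=
  sturmian_eq_of_floor_eq (floor_mul_eq_of_abs_sub_le hPQ hα hk (by omega)).symm
    (floor_mul_eq_of_abs_sub_le hPQ hα (by omega) hkQ).symm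

namespace GenContFract

variable {K : Type*} [Field K] [LinearOrder K] [FloorRing K]

theorem exists_int_eq_contsAux (v : K) (n : ℕ) :
    ∃ a b : ℤ, (of v).contsAux n = ⟨a, b⟩ := by
  suffices h : ∀ n, (∃ a b : ℤ, (of v).contsAux n = ⟨a, b⟩) ∧
      ∃ a b : ℤ, (of v).contsAux (n + 1) = ⟨a, b⟩ from (h n).1
  intro n
  induction n with
  | zero => exact ⟨⟨1, 0, by simp [zeroth_contAux_eq_one_zero]⟩,
      ⟨⌊v⌋, 1, by simp [first_contAux_eq_h_one, of_h_eq_floor]⟩⟩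
  | succ n ih =>
    refine ⟨ih.2, ?_⟩
    obtain ⟨⟨a₀, b₀, h₀⟩, ⟨a₁, b₁, h₁⟩⟩ := ih
    rcases hs : (of v).s.get? n with _ | gp
    · exact ⟨a₁, b₁, by simp [contsAux, hs, h₁]⟩
    · obtain ⟨z, hz⟩ := exists_int_eq_of_partDen (partDen_eq_s_b hs)
      have ha : gp.a = 1 := of_partNum_eq_one (partNum_eq_s_a hs)
      refine ⟨z * a₁ + a₀, z * b₁ + b₀, ?_⟩
      rw [contsAux_recurrence hs h₀ h₁, ha, hz]
      push_cast
      ring_nf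

theorem exists_int_eq_nums_dens (v : K) (n : ℕ) :
    ∃ P Q : ℤ, (of v).nums n = P ∧ (of v).dens n = Q := by
  obtain ⟨a, b, h⟩ := exists_int_eq_contsAux v (n + 1)
  exact ⟨a, b, by rw [num_eq_conts_a, nth_cont_eq_succ_nth_contAux, h],
    by rw [den_eq_conts_b, nth_cont_eq_succ_nth_contAux, h]⟩

theorem isCoprime_of_nums_eq_of_dens_eq {v : K} {n : ℕ} (hn : ¬(of v).TerminatedAt n) {P Q : ℤ}
    (hP : (of v).nums n = P) (hQ : (of v).dens n = Q) : IsCoprime P Q := by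
  obtain ⟨P', Q', hP', hQ'⟩ := exists_int_eq_nums_dens v (n + 1)
  have hdet : P * Q' - Q * P' = (-1) ^ (n + 1) := by
    have := SimpContFract.determinant (s := SimpContFract.of v) hn
    rw [SimpContFract.of, hP, hQ, hP', hQ'] at this
    exact_mod_cast this
  have hsq : ((-1 : ℤ) ^ (n + 1)) * (-1) ^ (n + 1) = 1 := by
    rw [← mul_pow]
    norm_num
  exact ⟨(-1) ^ (n + 1) * Q', -((-1) ^ (n + 1) * P'), by
    linear_combination (-1) ^ (n + 1) * hdet + hsq⟩

variable [IsStrictOrderedRing K]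

theorem abs_sub_nums_div_dens_le {v : K} {n : ℕ} (hn : ¬(of v).TerminatedAt n) :
    |v - (of v).nums n / (of v).dens n| ≤ 1 / (of v).dens n ^ 2 := by
  refine (conv_eq_num_div_den (g := of v) ▸ abs_sub_convs_le hn).trans ?_
  rcases (zero_le_of_den (v := v) (n := n)).eq_or_lt with h | h
  · simp [← h]
  · rw [sq]
    gcongr
    exact of_den_mono

theorem not_terminatedAt_of_irrational {α : ℝ} (hα : Irrational α) (n : ℕ) :
    ¬(of α).TerminatedAt n := fun h => by
  obtain ⟨q, hq⟩ := (terminates_iff_rat α).mp ⟨n, h⟩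
  exact hα ⟨q, hq.symm⟩

end GenContFract

theorem stmt4_general (α : ℝ) (hα : Irrational α)
    (n : ℕ) (k : ℤ) (hk1 : 1 ≤ k)
    (hk2 : (k : ℝ) ≤ (GenContFract.of α).dens n - 2) :
    sturmian ((GenContFract.of α).nums n / (GenContFract.of α).dens n) k
      = sturmian α k := by
  have hn := GenContFract.not_terminatedAt_of_irrational hα n
  obtain ⟨P, Q, hP, hQ⟩ := GenContFract.exists_int_eq_nums_dens α n
  have happrox := GenContFract.abs_sub_nums_div_dens_le hn
  rw [hP, hQ] at happrox ⊢
  rw [hQ] at hk2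
  have hkQ : k + 1 < Q := by exact_mod_cast (by linarith : (k : ℝ) + 1 < Q)
  have hcop := GenContFract.isCoprime_of_nums_eq_of_dens_eq hn hP hQ
  exact sturmian_eq_of_abs_sub_le hcop happrox hk1 hkQ

/-- For irrational `α ∈ [0,1]` with `n`-th convergent `α_n = p_n/q_n`, `n ≥ 2`, the
Sturmian words with slopes `α_n` and `α` coincide for `1 ≤ k ≤ q_n − 2`. -/
theorem stmt4 (α : ℝ) (hα : Irrational α) (hmem : α ∈ Set.Icc (0:ℝ) 1)
    (n : ℕ) (hn : 2 ≤ n) (k : ℤ) (hk1 : 1 ≤ k)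
    (hk2 : (k : ℝ) ≤ (GenContFract.of α).dens n - 2) :
    sturmian ((GenContFract.of α).nums n / (GenContFract.of α).dens n) k
      = sturmian α k :=
  stmt4_general α hα n k hk1 hk2
end

section
/- Let H be a 2-periodic discrete Schrödinger operator on ℓ²(ℤ) with potential values v(0), v(1) ∈ ℝ. Then the spectrum of H equals [½(v(0)+v(1)−δ), min{v(0),v(1)}] ∪ [max{v(0),v(1)}, ½(v(0)+v(1)+δ)], where δ = √(16 + v(0)² − 2v(0)v(1) + v(1)²). -/
/-!
The free Laplacian `Δ = S + S⁻¹` (with `S` the shift) enters through the identity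
`(H - v 0) * (H - v 1) = Δ ^ 2`, which holds because `v` alternates between its two values.
Conjugating `S` by the modulations `x n ↦ μ ^ n * x n` shows that `σ(S)` is invariant under
rotations, so it is the unit circle; the factorisation
`a + a⁻¹ - Δ = -S⁻¹ (a - S) (a⁻¹ - S)` then gives `σ(Δ) = [-2, 2]` and `σ(Δ²) = [0, 4]`.
By the spectral mapping theorem `σ(Δ²) = p(σ(H))` for `p z = (z - v 0) * (z - v 1)`. The staggered
shift `x n ↦ (-1) ^ n * x (n + 1)` conjugates `H` to `v 0 + v 1 - H`, so `σ(H)` is invariant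
under `z ↦ v 0 + v 1 - z`, which swaps the two solutions of `p z = c`; therefore
`σ(H) = p⁻¹ [0, 4]`. The conditions `0 ≤ p z ≤ 4` force `z` to be real, and solving the two
quadratic inequalities gives the bands.
-/

open Complex

section Algebra

variable {R A : Type*} [Field R] [Ring A] [Algebra R A]

theorem spectrum.add_inv_mem_units_add_inv_iff (u : Aˣ) {a : R} (ha : a ≠ 0) :
    a + a⁻¹ ∈ spectrum R (↑u + ↑u⁻¹ : A) ↔
      a ∈ spectrum R (u : A) ∨ a⁻¹ ∈ spectrum R (u : A) := by
  set b := algebraMap R A a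
  set b' := algebraMap R A a⁻¹
  have hbb' : b * b' = 1 := by rw [← map_mul, mul_inv_cancel₀ ha, map_one]
  have hfac : algebraMap R A (a + a⁻¹) - (↑u + ↑u⁻¹) = -(↑u⁻¹ * ((b - u) * (b' - u))) := by
    have hexp : (b - u) * (b' - u) = b * b' - b * u - u * b' + u * u := by noncomm_ring
    rw [hexp, hbb', Algebra.commutes a (u : A)]
    simp only [mul_add, mul_sub, ← mul_assoc, Units.inv_mul, one_mul, mul_one, map_add]
    abel
  have hcomm : Commute (b - u) (b' - u) :=
    ((Algebra.commute_algebraMap_left _ _).sub_right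
      (Algebra.commute_algebraMap_left _ _)).sub_left
      ((Algebra.commute_algebraMap_right _ _).sub_right (Commute.refl _))
  simp only [spectrum.mem_iff, hfac, IsUnit.neg_iff, Units.isUnit_units_mul, hcomm.isUnit_mul_iff]
  tauto

theorem spectrum.sub_mem_of_units_mul_eq {a : A} {c : R} (w : Aˣ)
    (hw : ↑w * a = (algebraMap R A c - a) * ↑w) {z : R} (hz : z ∈ spectrum R a) :
    c - z ∈ spectrum R a := by
  have hconj : ↑w * a * ↑w⁻¹ = algebraMap R A c - a := by
    rw [hw, mul_assoc, Units.mul_inv, mul_one]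
  rw [← spectrum.units_conjugate (u := w), hconj, ← spectrum.singleton_sub_eq]
  exact Set.sub_mem_sub rfl hz

end Algebra

theorem Complex.exists_ne_zero_add_inv_eq (w : ℂ) : ∃ a : ℂ, a ≠ 0 ∧ a + a⁻¹ = w := by
  obtain ⟨s, hs⟩ := IsAlgClosed.exists_pow_nat_eq (w ^ 2 - 4) two_pos
  have hprod : (w + s) / 2 * ((w - s) / 2) = 1 := by linear_combination -hs / 4
  refine ⟨(w + s) / 2, left_ne_zero_of_mul_eq_one hprod, ?_⟩
  rw [inv_eq_of_mul_eq_one_right hprod]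
  ring

theorem Complex.add_inv_eq_two_mul_re {a : ℂ} (ha : ‖a‖ = 1) : a + a⁻¹ = 2 * a.re := by
  rw [inv_eq_conj ha, add_conj, ofReal_mul, ofReal_ofNat]

theorem Complex.exists_norm_eq_one_add_inv_eq {t : ℝ} (ht : t ∈ Set.Icc (-2 : ℝ) 2) :
    ∃ a : ℂ, ‖a‖ = 1 ∧ a + a⁻¹ = t := by
  have hsq : 0 ≤ 1 - (t / 2) ^ 2 := by nlinarith [ht.1, ht.2]
  set a : ℂ := ⟨t / 2, √(1 - (t / 2) ^ 2)⟩
  have ha : ‖a‖ = 1 := by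
    rw [norm_def, normSq_mk, Real.mul_self_sqrt hsq, Real.sqrt_eq_one]
    ring
  refine ⟨a, ha, ?_⟩
  rw [add_inv_eq_two_mul_re ha, show a.re = t / 2 from rfl]
  push_cast
  ring

theorem spectrum.units_add_inv_eq_Icc {A : Type*} [Ring A] [Algebra ℂ A] {u : Aˣ}
    (hu : spectrum ℂ (u : A) = Metric.sphere 0 1) :
    spectrum ℂ (↑u + ↑u⁻¹ : A) = ofReal '' Set.Icc (-2) 2 := by
  ext w
  constructor
  · intro hw
    obtain ⟨a, ha0, rfl⟩ := exists_ne_zero_add_inv_eq w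
    rw [spectrum.add_inv_mem_units_add_inv_iff u ha0, hu] at hw
    have ha : ‖a‖ = 1 := by simpa [mem_sphere_zero_iff_norm, norm_inv] using hw
    refine ⟨2 * a.re, ⟨?_, ?_⟩, by rw [add_inv_eq_two_mul_re ha]; push_cast; ring⟩ <;>
      linarith [abs_le.1 (ha ▸ abs_re_le_norm a)]
  · rintro ⟨t, ht, rfl⟩
    obtain ⟨a, ha, hat⟩ := exists_norm_eq_one_add_inv_eq ht
    rw [← hat, spectrum.add_inv_mem_units_add_inv_iff u (norm_ne_zero_iff.1 (ha ▸ one_ne_zero)), hu]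
    exact Or.inl (mem_sphere_zero_iff_norm.2 ha)

section ComplexBanachAlgebra

variable {A : Type*} [NormedRing A] [NormedAlgebra ℂ A] [CompleteSpace A]

theorem spectrum.eq_sphere_of_units_mul_eq_smul [Nontrivial A] {u : A}
    (hu : spectrum ℂ u ⊆ Metric.sphere 0 1)
    (hrot : ∀ μ : ℂ, ‖μ‖ = 1 → ∃ w : Aˣ, ↑w * u = (μ • u) * ↑w) :
    spectrum ℂ u = Metric.sphere 0 1 := by
  refine hu.antisymm fun w hw => ?_
  obtain ⟨z, hz⟩ := spectrum.nonempty u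
  have hz1 : ‖z‖ = 1 := mem_sphere_zero_iff_norm.1 (hu hz)
  have hw1 : ‖w‖ = 1 := mem_sphere_zero_iff_norm.1 hw
  have hz0 : z ≠ 0 := norm_ne_zero_iff.1 (by rw [hz1]; exact one_ne_zero)
  obtain ⟨v, hv⟩ := hrot (w / z) (by rw [norm_div, hz1, hw1, div_one])
  have hconj : ↑v * u * ↑v⁻¹ = (w / z) • u := by rw [hv, mul_assoc, Units.mul_inv, mul_one]
  rw [← spectrum.units_conjugate (u := v), hconj,
    spectrum.smul_eq_smul _ _ ⟨z, hz⟩]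
  exact ⟨z, hz, by simp [div_mul_cancel₀ _ hz0]⟩

open Polynomial in
theorem spectrum.eq_preimage_of_reflection [Nontrivial A] {a : A} {α β : ℂ}
    (hsymm : ∀ z ∈ spectrum ℂ a, α + β - z ∈ spectrum ℂ a) :
    spectrum ℂ a = (fun z => (z - α) * (z - β)) ⁻¹'
      spectrum ℂ ((a - algebraMap ℂ A α) * (a - algebraMap ℂ A β)) := by
  have hmap := spectrum.map_polynomial_aeval a ((X - C α) * (X - C β))
  simp only [map_mul, map_sub, aeval_X, aeval_C, eval_mul, eval_sub, eval_X, eval_C] at hmap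
  rw [hmap]
  ext z
  refine ⟨fun hz => ⟨z, hz, rfl⟩, ?_⟩
  rintro ⟨s, hs, hsz⟩
  have : (s - z) * (s - (α + β - z)) = 0 := by linear_combination hsz
  rcases mul_eq_zero.1 this with h | h
  · rwa [← sub_eq_zero.1 h]
  · simpa [sub_eq_zero.1 h] using hsymm s hs

end ComplexBanachAlgebra

open scoped ENNReal

namespace lp

variable {ι 𝕜 E : Type*} [NormedField 𝕜] [NormedAddCommGroup E] [NormedSpace 𝕜 E]
  {p : ℝ≥0∞}

theorem _root_.Memℓp.comp_equiv {f : ι → E} (hf : Memℓp f p) (hp : 0 < p.toReal) (e : ι ≃ ι) :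
    Memℓp (f ∘ e) p := by
  rw [memℓp_gen_iff hp]
  exact (e.summable_iff (f := fun i => ‖f i‖ ^ p.toReal)).2 (hf.summable hp)

theorem _root_.Memℓp.smul_of_norm_eq_one {f : ι → E} (hf : Memℓp f p) {c : ι → 𝕜}
    (hc : ∀ i, ‖c i‖ = 1) : Memℓp (fun i => c i • f i) p :=
  hf.mono' fun i => by rw [norm_smul, hc, one_mul]

variable [Fact (1 ≤ p)]

noncomputable def compEquivₗᵢ (hp : 0 < p.toReal) (e : ι ≃ ι) :
    lp (fun _ : ι => E) p ≃ₗᵢ[𝕜] lp (fun _ : ι => E) p where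
  toFun x := ⟨x ∘ e, (lp.memℓp x).comp_equiv hp e⟩
  invFun x := ⟨x ∘ e.symm, (lp.memℓp x).comp_equiv hp e.symm⟩
  map_add' _ _ := rfl
  map_smul' _ _ := rfl
  left_inv x := lp.ext <| funext fun i => congrArg x (e.apply_symm_apply i)
  right_inv x := lp.ext <| funext fun i => congrArg x (e.symm_apply_apply i)
  norm_map' x := by
    rw [lp.norm_eq_tsum_rpow hp, lp.norm_eq_tsum_rpow hp]
    exact congrArg (· ^ (1 / p.toReal)) (e.tsum_eq (fun i => ‖x i‖ ^ p.toReal))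

noncomputable def smulUnimodularₗᵢ (c : ι → 𝕜) (hc : ∀ i, ‖c i‖ = 1) :
    lp (fun _ : ι => E) p ≃ₗᵢ[𝕜] lp (fun _ : ι => E) p where
  toFun x := ⟨fun i => c i • x i, (lp.memℓp x).smul_of_norm_eq_one hc⟩
  invFun x := ⟨fun i => (c i)⁻¹ • x i,
    (lp.memℓp x).smul_of_norm_eq_one fun i => by rw [norm_inv, hc, inv_one]⟩
  map_add' x y := lp.ext <| funext fun i => smul_add (c i) (x i) (y i)
  map_smul' a x := lp.ext <| funext fun i => smul_comm (c i) a (x i)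
  left_inv x := lp.ext <| funext fun i =>
    inv_smul_smul₀ (norm_ne_zero_iff.1 (by rw [hc]; exact one_ne_zero)) (x i)
  right_inv x := lp.ext <| funext fun i =>
    smul_inv_smul₀ (norm_ne_zero_iff.1 (by rw [hc]; exact one_ne_zero)) (x i)
  norm_map' x := le_antisymm
    (lp.norm_mono (zero_lt_one.trans_le Fact.out).ne' fun i => by simp [norm_smul, hc])
    (lp.norm_mono (zero_lt_one.trans_le Fact.out).ne' fun i => by simp [norm_smul, hc])

end lp

instance lp.nontrivial {ι : Type*} {E : ι → Type*} [∀ i, NormedAddCommGroup (E i)] [Nonempty ι]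
    [∀ i, Nontrivial (E i)] {p : ℝ≥0∞} : Nontrivial (lp E p) := by
  classical
  obtain ⟨i⟩ := ‹Nonempty ι›
  obtain ⟨x, hx⟩ := exists_ne (0 : E i)
  exact ⟨lp.single p i x, 0, fun h => hx (by simpa using congrArg (fun y : lp E p => y i) h)⟩

theorem setOf_sub_mul_sub_mem_Icc_zero_four (a b : ℝ) :
    {t : ℝ | (t - a) * (t - b) ∈ Set.Icc 0 4} =
      Set.Icc ((a + b - √(16 + a ^ 2 - 2 * a * b + b ^ 2)) / 2) (min a b) ∪
        Set.Icc (max a b) ((a + b + √(16 + a ^ 2 - 2 * a * b + b ^ 2)) / 2) := by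
  set δ := √(16 + a ^ 2 - 2 * a * b + b ^ 2)
  have hδsq : δ ^ 2 = 16 + (a - b) ^ 2 := by
    rw [Real.sq_sqrt (by nlinarith [sq_nonneg (a - b)])]
    ring
  have hδ : 4 ≤ δ := by
    nlinarith [sq_nonneg (a - b), Real.sqrt_nonneg (16 + a ^ 2 - 2 * a * b + b ^ 2)]
  ext t
  simp only [Set.mem_ofPred_eq, Set.mem_union, Set.mem_Icc, le_min_iff, max_le_iff]
  constructor
  · rintro ⟨h0, h4⟩
    have hsl : -δ ≤ 2 * t - a - b := by nlinarith
    have hsr : 2 * t - a - b ≤ δ := by nlinarith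
    rcases mul_nonneg_iff.1 h0 with ⟨ha, hb⟩ | ⟨ha, hb⟩
    · right; exact ⟨⟨by linarith, by linarith⟩, by linarith⟩
    · left; exact ⟨by linarith, by linarith, by linarith⟩
  · rintro (⟨hl, ha, hb⟩ | ⟨⟨ha, hb⟩, hr⟩)
    · have h := mul_nonneg (by linarith : 0 ≤ δ + (2 * t - a - b)) (by linarith : 0 ≤ a + b - 2 * t)
      exact ⟨by nlinarith, by nlinarith⟩
    · have h := mul_nonneg (by linarith : 0 ≤ δ - (2 * t - a - b)) (by linarith : 0 ≤ 2 * t - a - b)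
      exact ⟨by nlinarith, by nlinarith⟩

theorem Complex.preimage_sub_mul_sub_image_ofReal (a b : ℝ) {s : Set ℝ} (hs : s ⊆ Set.Ici 0) :
    (fun z : ℂ => (z - a) * (z - b)) ⁻¹' (ofReal '' s) =
      ofReal '' {t : ℝ | (t - a) * (t - b) ∈ s} := by
  ext z
  constructor
  · rintro ⟨r, hr, hrz⟩
    have hre := congrArg re hrz
    have him := congrArg im hrz
    simp only [ofReal_re, ofReal_im, mul_re, mul_im, sub_re, sub_im, sub_zero] at hre him
    have hz : z.im = 0 := by
      by_contra h
      have hmid : 2 * z.re = a + b := by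
        have : z.im * (2 * z.re - a - b) = 0 := by linarith
        linarith [(mul_eq_zero.1 this).resolve_left h]
      nlinarith [Set.mem_Ici.1 (hs hr), sq_nonneg (a - b), sq_pos_of_ne_zero h]
    refine ⟨z.re, ?_, Complex.ext rfl hz.symm⟩
    rwa [Set.mem_ofPred_eq, show (z.re - a) * (z.re - b) = r by rw [hre, hz]; ring]
  · rintro ⟨t, ht, rfl⟩
    exact ⟨_, ht, by push_cast; ring⟩

theorem Function.Periodic.two_cases {α : Type*} {v : ℤ → α} (hv : Function.Periodic v 2) (n : ℤ) :
    (v n = v 0 ∧ v (n + 1) = v 1) ∨ (v n = v 1 ∧ v (n + 1) = v 0) := by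
  obtain ⟨k, rfl | rfl⟩ := Int.even_or_odd' n
  · left
    exact ⟨by simpa [mul_comm] using hv.int_mul_eq k,
      by simpa [mul_comm, add_comm] using hv.int_mul k 1⟩
  · right
    refine ⟨by simpa [mul_comm, add_comm] using hv.int_mul k 1, ?_⟩
    rw [show 2 * k + 1 + 1 = (k + 1) * 2 by ring]
    exact hv.int_mul_eq (k + 1)

theorem Function.Periodic.add_add_one_eq {R : Type*} [CommRing R] {v : ℤ → R}
    (hv : Function.Periodic v 2) (n : ℤ) : v n + v (n + 1) = v 0 + v 1 := by
  rcases hv.two_cases n with ⟨h0, h1⟩ | ⟨h0, h1⟩ <;> rw [h0, h1]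
  exact add_comm _ _

theorem Function.Periodic.sub_mul_sub_eq_zero {R : Type*} [CommRing R] {v : ℤ → R}
    (hv : Function.Periodic v 2) (n : ℤ) : (v n - v 0) * (v n - v 1) = 0 := by
  rcases hv.two_cases n with ⟨h0, -⟩ | ⟨h0, -⟩ <;> rw [h0] <;> ring

namespace DiscreteSchrodinger

local notation "ℓ²" => lp (fun _ : ℤ => ℂ) 2

noncomputable def shiftₗᵢ : ℓ² ≃ₗᵢ[ℂ] ℓ² := lp.compEquivₗᵢ (by norm_num) (Equiv.addRight 1)

noncomputable def shift : (ℓ² →L[ℂ] ℓ²)ˣ := shiftₗᵢ.toContinuousLinearEquiv.toUnit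

noncomputable def modulation (μ : ℂ) (hμ : ‖μ‖ = 1) : (ℓ² →L[ℂ] ℓ²)ˣ :=
  (lp.smulUnimodularₗᵢ (fun n : ℤ => μ ^ n) fun n => by rw [norm_zpow, hμ, one_zpow])
    |>.toContinuousLinearEquiv.toUnit

noncomputable def freeLaplacian : ℓ² →L[ℂ] ℓ² := ↑shift + ↑shift⁻¹

noncomputable def staggeredShift : (ℓ² →L[ℂ] ℓ²)ˣ := modulation (-1) (by simp) * shift

@[simp]
theorem shift_apply (x : ℓ²) (n : ℤ) : (shift : ℓ² →L[ℂ] ℓ²) x n = x (n + 1) := rfl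

@[simp]
theorem shift_inv_apply (x : ℓ²) (n : ℤ) : (↑shift⁻¹ : ℓ² →L[ℂ] ℓ²) x n = x (n - 1) := rfl

@[simp]
theorem modulation_apply (μ : ℂ) (hμ : ‖μ‖ = 1) (x : ℓ²) (n : ℤ) :
    (modulation μ hμ : ℓ² →L[ℂ] ℓ²) x n = μ ^ n * x n := rfl

theorem spectrum_shift : spectrum ℂ (shift : ℓ² →L[ℂ] ℓ²) = Metric.sphere 0 1 := by
  refine spectrum.eq_sphere_of_units_mul_eq_smul
    (spectrum.subset_circle_of_unitary (Unitary.linearIsometryEquiv.symm shiftₗᵢ).prop)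
    fun μ hμ => ⟨modulation μ⁻¹ (by rw [norm_inv, hμ, inv_one]), ?_⟩
  have hμ0 : μ ≠ 0 := norm_ne_zero_iff.1 (by rw [hμ]; exact one_ne_zero)
  ext x n
  simp only [mul_apply_eq_comp, Algebra.smul_mul_assoc, smul_apply, lp.coeFn_smul, Pi.smul_apply,
    smul_eq_mul, modulation_apply, shift_apply, zpow_add_one₀ (inv_ne_zero hμ0)]
  field_simp

theorem spectrum_freeLaplacian : spectrum ℂ freeLaplacian = Complex.ofReal '' Set.Icc (-2) 2 :=
  spectrum.units_add_inv_eq_Icc spectrum_shift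

theorem spectrum_freeLaplacian_sq :
    spectrum ℂ (freeLaplacian ^ 2) = Complex.ofReal '' Set.Icc 0 4 := by
  rw [spectrum.map_pow, spectrum_freeLaplacian, Set.image_image]
  ext z
  constructor
  · rintro ⟨t, ht, rfl⟩
    exact ⟨t ^ 2, ⟨sq_nonneg t, by nlinarith [ht.1, ht.2]⟩, by push_cast; rfl⟩
  · rintro ⟨s, hs, rfl⟩
    have hsq := Real.sq_sqrt hs.1
    refine ⟨√s, ⟨by linarith [Real.sqrt_nonneg s], by nlinarith [Real.sqrt_nonneg s, hs.2]⟩, ?_⟩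
    simp only [← ofReal_pow, hsq]

section Potential

variable (v : ℤ → ℝ) (hv : Function.Periodic v 2) (H : ℓ² →L[ℂ] ℓ²)
  (hH : ∀ (x : ℓ²) (n : ℤ), H x n = x (n + 1) + x (n - 1) + (v n : ℂ) * x n)
include hv hH

theorem sub_mul_sub_eq_freeLaplacian_sq :
    (H - algebraMap ℂ _ (v 0 : ℂ)) * (H - algebraMap ℂ _ (v 1 : ℂ)) = freeLaplacian ^ 2 := by
  have hv' := hv.comp ofReal
  ext x n
  have hsum := hv'.add_add_one_eq n
  have hsum' := hv'.add_add_one_eq (n - 1)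
  have hprod := hv'.sub_mul_sub_eq_zero n
  simp only [Function.comp_apply, sub_add_cancel] at hsum hsum' hprod
  simp only [freeLaplacian, pow_two, mul_apply_eq_comp, sub_apply, add_apply,
    Algebra.algebraMap_eq_smul_one, smul_apply, one_apply_eq_self, lp.coeFn_sub, lp.coeFn_add,
    lp.coeFn_smul, Pi.sub_apply, Pi.add_apply, Pi.smul_apply, smul_eq_mul, hH, shift_apply,
    shift_inv_apply]
  linear_combination x (n + 1) * hsum + x (n - 1) * hsum' + x n * hprod

theorem staggeredShift_mul_eq :
    ↑staggeredShift * H = (algebraMap ℂ _ ((v 0 : ℂ) + v 1) - H) * ↑staggeredShift := by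
  have hv' := hv.comp ofReal
  ext x n
  have hsum := hv'.add_add_one_eq n
  simp only [Function.comp_apply] at hsum
  simp only [staggeredShift, Units.val_mul, mul_apply_eq_comp, sub_apply,
    Algebra.algebraMap_eq_smul_one, smul_apply, one_apply_eq_self, lp.coeFn_sub, lp.coeFn_smul,
    Pi.sub_apply, Pi.smul_apply, smul_eq_mul, hH, shift_apply, modulation_apply, sub_add_cancel,
    add_sub_cancel_right, zpow_add_one₀ (neg_ne_zero.2 one_ne_zero : (-1 : ℂ) ≠ 0),
    zpow_sub_one₀ (neg_ne_zero.2 one_ne_zero : (-1 : ℂ) ≠ 0)]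
  linear_combination (-1) ^ n * x (n + 1) * hsum

end Potential

end DiscreteSchrodinger

open DiscreteSchrodinger

/-- The spectrum of a 2-periodic discrete Schrödinger operator on `ℓ²(ℤ)` consists of the
two explicit bands. -/
theorem stmt5 (v : ℤ → ℝ) (hper : ∀ n : ℤ, v (n + 2) = v n)
    (H : lp (fun _ : ℤ => ℂ) 2 →L[ℂ] lp (fun _ : ℤ => ℂ) 2)
    (hH : ∀ (x : lp (fun _ : ℤ => ℂ) 2) (n : ℤ),
      H x n = x (n + 1) + x (n - 1) + (v n : ℂ) * x n) :
    spectrum ℂ H = Complex.ofReal ''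
      (Set.Icc ((v 0 + v 1 - Real.sqrt (16 + v 0 ^ 2 - 2 * v 0 * v 1 + v 1 ^ 2)) / 2)
          (min (v 0) (v 1)) ∪
        Set.Icc (max (v 0) (v 1))
          ((v 0 + v 1 + Real.sqrt (16 + v 0 ^ 2 - 2 * v 0 * v 1 + v 1 ^ 2)) / 2)) := by
  have hsymm : ∀ z ∈ spectrum ℂ H, (v 0 : ℂ) + v 1 - z ∈ spectrum ℂ H := fun z hz =>
    spectrum.sub_mem_of_units_mul_eq _ (staggeredShift_mul_eq v hper H hH) hz
  rw [spectrum.eq_preimage_of_reflection hsymm, sub_mul_sub_eq_freeLaplacian_sq v hper H hH,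
    spectrum_freeLaplacian_sq, Complex.preimage_sub_mul_sub_image_ofReal _ _ fun r hr => hr.1,
    setOf_sub_mul_sub_mem_Icc_zero_four]
end

section
/- Let I ⊆ ℤ, p ∈ [1,∞], and let A and (A_n)_{n∈ℕ} be bounded self-adjoint band operators on ℓ²(I) with A_n x → Ax for all finitely supported x. If some subsequence (A_{n_k}) is stable (all A_{n_k} invertible with sup_k ‖A_{n_k}^{-1}‖ < ∞), then A is invertible and ‖A^{-1}‖ ≤ sup_k ‖A_{n_k}^{-1}‖. -/
/-!
By the uniform bound on the inverses, `‖x‖ ≤ ‖A_{n_k}⁻¹‖ ‖A_{n_k} x‖` passes to the limit and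
gives `‖x‖ ≤ c ‖A x‖`, `c = sup_k ‖A_{n_k}⁻¹‖`, for finitely supported `x`, hence by density
for all `x`. So `A` is injective with closed range; being self-adjoint, its range is also dense
(`(range A)ᗮ = ker A* = ker A = 0`), so `A` is invertible, and the lower bound is the bound
`‖A⁻¹‖ ≤ c`.
-/

open Filter Topology

section Normed

variable {𝕜 E : Type*} [NontriviallyNormedField 𝕜] [NormedAddCommGroup E] [NormedSpace 𝕜 E]

namespace ContinuousLinearMap

theorem norm_le_norm_inverse_mul_norm_apply {T : E →L[𝕜] E} (hT : IsUnit T) (x : E) :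
    ‖x‖ ≤ ‖Ring.inverse T‖ * ‖T x‖ := by
  obtain ⟨u, rfl⟩ := hT
  calc ‖x‖ = ‖(↑u⁻¹ : E →L[𝕜] E) ((u : E →L[𝕜] E) x)‖ := by
        rw [← mul_apply_eq_comp, u.inv_mul, one_apply_eq_self]
    _ ≤ ‖Ring.inverse (u : E →L[𝕜] E)‖ * ‖(u : E →L[𝕜] E) x‖ := by
      rw [Ring.inverse_unit]; exact le_opNorm _ _

theorem norm_le_mul_norm_apply_of_tendsto {ι : Type*} {l : Filter ι} [l.NeBot]
    {B : ι → E →L[𝕜] E} {A : E →L[𝕜] E} {c : ℝ} (hB : ∀ k, IsUnit (B k))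
    (hc : ∀ k, ‖Ring.inverse (B k)‖ ≤ c) {x : E}
    (hx : Tendsto (fun k => B k x) l (𝓝 (A x))) : ‖x‖ ≤ c * ‖A x‖ :=
  ge_of_tendsto (hx.norm.const_mul c) <| Eventually.of_forall fun k =>
    (norm_le_norm_inverse_mul_norm_apply (hB k) x).trans <|
      mul_le_mul_of_nonneg_right (hc k) (norm_nonneg _)

theorem norm_inverse_le_of_forall_norm_le {T : E →L[𝕜] E} (hT : IsUnit T) {c : ℝ} (hc : 0 ≤ c)
    (h : ∀ x, ‖x‖ ≤ c * ‖T x‖) : ‖Ring.inverse T‖ ≤ c := by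
  obtain ⟨u, rfl⟩ := hT
  refine opNorm_le_bound _ hc fun y => ?_
  simpa [← mul_apply_eq_comp] using h ((↑u⁻¹ : E →L[𝕜] E) y)

end ContinuousLinearMap

end Normed

theorem lp.dense_setOf_finite_support {α : Type*} {E : α → Type*} [∀ i, NormedAddCommGroup (E i)]
    {p : ENNReal} [Fact (1 ≤ p)] (hp : p ≠ ⊤) : Dense {f : lp E p | {i | f i ≠ 0}.Finite} := by
  classical
  refine fun f => mem_closure_of_tendsto (lp.hasSum_single hp f) (Eventually.of_forall fun s => ?_)
  refine s.finite_toSet.subset fun j hj => ?_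
  by_contra hjs
  refine hj ?_
  rw [lp.coeFn_sum]
  simp [lp.single_apply, Finset.mem_coe.not.mp hjs]

theorem IsSelfAdjoint.isUnit_of_antilipschitz {𝕜 E : Type*} [RCLike 𝕜] [NormedAddCommGroup E]
    [InnerProductSpace 𝕜 E] [CompleteSpace E] {T : E →L[𝕜] E} (hT : IsSelfAdjoint T)
    {c : NNReal} (hc : AntilipschitzWith c T) : IsUnit T := by
  rw [ContinuousLinearMap.isUnit_iff_bijective,
    ContinuousLinearMap.bijective_iff_dense_range_and_antilipschitz]
  refine ⟨?_, c, hc⟩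
  rw [Submodule.topologicalClosure_eq_top_iff, ContinuousLinearMap.orthogonal_range,
    ← ContinuousLinearMap.star_eq_adjoint, hT.star_eq, LinearMap.ker_eq_bot]
  exact hc.injective

theorem stmt13_general (I : Set ℤ)
    (A : lp (fun _ : I => ℂ) 2 →L[ℂ] lp (fun _ : I => ℂ) 2)
    (As : ℕ → (lp (fun _ : I => ℂ) 2 →L[ℂ] lp (fun _ : I => ℂ) 2))
    (hsa : IsSelfAdjoint A)
    (hconv : ∀ x : lp (fun _ : I => ℂ) 2, {i : I | x i ≠ 0}.Finite →
      Filter.Tendsto (fun n => As n x) Filter.atTop (nhds (A x)))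
    (nk : ℕ → ℕ) (hnk : StrictMono nk)
    (hinv : ∀ k, IsUnit (As (nk k)))
    (C : ℝ) (hC : ∀ k, ‖Ring.inverse (As (nk k))‖ ≤ C) :
    IsUnit A ∧ ‖Ring.inverse A‖ ≤ ⨆ k, ‖Ring.inverse (As (nk k))‖ := by
  set c := ⨆ k, ‖Ring.inverse (As (nk k))‖
  have hbdd : BddAbove (Set.range fun k => ‖Ring.inverse (As (nk k))‖) :=
    ⟨C, Set.forall_mem_range.mpr hC⟩
  have hc0 : 0 ≤ c := (norm_nonneg _).trans (le_ciSup hbdd 0)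
  have hbound : ∀ x, ‖x‖ ≤ c * ‖A x‖ :=
    (lp.dense_setOf_finite_support (p := 2) ENNReal.ofNat_ne_top).induction
      (fun x hx => ContinuousLinearMap.norm_le_mul_norm_apply_of_tendsto hinv (le_ciSup hbdd)
        ((hconv x hx).comp hnk.tendsto_atTop))
      (isClosed_le continuous_norm (continuous_const.mul A.continuous.norm))
  have hunit : IsUnit A := hsa.isUnit_of_antilipschitz <|
    A.antilipschitz_of_bound (K := c.toNNReal) fun x => by
      rw [Real.coe_toNNReal c hc0]; exact hbound x
  exact ⟨hunit, ContinuousLinearMap.norm_inverse_le_of_forall_norm_le hunit hc0 hbound⟩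

/-- If self-adjoint band operators `A_n` on `ℓ²(I)` converge to `A` pointwise on finitely
supported vectors and some subsequence is stable, then `A` is invertible and
`‖A⁻¹‖ ≤ sup_k ‖A_{n_k}⁻¹‖`. -/
theorem stmt13 (I : Set ℤ)
    (A : lp (fun _ : I => ℂ) 2 →L[ℂ] lp (fun _ : I => ℂ) 2)
    (As : ℕ → (lp (fun _ : I => ℂ) 2 →L[ℂ] lp (fun _ : I => ℂ) 2))
    (hsa : IsSelfAdjoint A) (hsan : ∀ n, IsSelfAdjoint (As n))
    (w : ℕ)
    (hbandA : ∀ (x : lp (fun _ : I => ℂ) 2) (i : I),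
      (∀ j : I, |(i : ℤ) - (j : ℤ)| ≤ (w : ℤ) → x j = 0) → A x i = 0)
    (hbandn : ∀ n, ∀ (x : lp (fun _ : I => ℂ) 2) (i : I),
      (∀ j : I, |(i : ℤ) - (j : ℤ)| ≤ (w : ℤ) → x j = 0) → As n x i = 0)
    (hconv : ∀ x : lp (fun _ : I => ℂ) 2, {i : I | x i ≠ 0}.Finite →
      Filter.Tendsto (fun n => As n x) Filter.atTop (nhds (A x)))
    (nk : ℕ → ℕ) (hnk : StrictMono nk)
    (hinv : ∀ k, IsUnit (As (nk k)))
    (C : ℝ) (hC : ∀ k, ‖Ring.inverse (As (nk k))‖ ≤ C) :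
    IsUnit A ∧ ‖Ring.inverse A‖ ≤ ⨆ k, ‖Ring.inverse (As (nk k))‖ :=
  stmt13_general I A As hsa hconv nk hnk hinv C hC
end

section
/- For the Fibonacci Hamiltonian with α = (√5 − 1)/2 and coupling λ ∈ ℝ, the traces of the Sturmian transfer-matrix products at Fibonacci denominators q_6 = 13 and q_7 = 21 at energy 0 satisfy tr(M_{λ,α,0}(q_6,0)) = λ(18λ² − 8) and tr(M_{λ,α,0}(q_7,0)) = λ(−108λ⁴ + 84λ² − 13); consequently for all λ > (3 + √3)/6, tr(M_{λ,α,0}(q_6,0)) > 2 and tr(M_{λ,α,0}(q_7,0)) < −2. -/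
/-- Sturmian transfer matrix `T(k,E) = [[E − λ·χ_{[1−α,1)}(kα mod 1), −1],[1,0]]`. -/
noncomputable def sturmianT (lam α E : ℝ) (k : ℤ) : Matrix (Fin 2) (Fin 2) ℝ :=
  !![E - lam * (if Int.fract (k * α) ∈ Set.Ico (1 - α) 1 then 1 else 0), -1; 1, 0]

/-- `M_{λ,α,0}(n,E) = T(n,E)⋯T(1,E)`. -/
noncomputable def sturmianM (lam α E : ℝ) (n : ℕ) : Matrix (Fin 2) (Fin 2) ℝ :=
  ((List.range n).map (fun j => sturmianT lam α E ((n : ℤ) - j))).prod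

lemma sT_one (lam α : ℝ) (k m : ℤ) (h1 : (m:ℝ) ≤ (k:ℝ)*α) (h2 : (k:ℝ)*α < m+1)
    (h3 : 1 - α ≤ (k:ℝ)*α - m) :
    sturmianT lam α 0 k = !![-lam, -1; 1, 0] := by
  have hfl : ⌊(k:ℝ)*α⌋ = m := Int.floor_eq_iff.mpr ⟨h1, h2⟩
  have hf : Int.fract ((k:ℝ)*α) = (k:ℝ)*α - m := by unfold Int.fract; rw [hfl]
  unfold sturmianT
  rw [hf, if_pos (Set.mem_Ico.mpr ⟨h3, by linarith⟩)]
  norm_num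

lemma sT_zero (lam α : ℝ) (k m : ℤ) (h1 : (m:ℝ) ≤ (k:ℝ)*α) (h2 : (k:ℝ)*α < m+1)
    (h3 : (k:ℝ)*α - m < 1 - α) :
    sturmianT lam α 0 k = !![(0:ℝ), -1; 1, 0] := by
  have hfl : ⌊(k:ℝ)*α⌋ = m := Int.floor_eq_iff.mpr ⟨h1, h2⟩
  have hf : Int.fract ((k:ℝ)*α) = (k:ℝ)*α - m := by unfold Int.fract; rw [hfl]
  unfold sturmianT
  rw [hf, if_neg (by simp only [Set.mem_Ico, not_and]; intro ha _; linarith)]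
  norm_num

lemma m2_ext {a b c d a' b' c' d' : ℝ} (h1 : a = a') (h2 : b = b') (h3 : c = c')
    (h4 : d = d') : !![a, b; c, d] = !![a', b'; c', d'] := by
  rw [h1, h2, h3, h4]

lemma sturmianM_succ (lam α E : ℝ) (n : ℕ) :
    sturmianM lam α E (n+1) = sturmianT lam α E ((n : ℤ) + 1) * sturmianM lam α E n := by
  simp only [sturmianM, List.pure_def, List.bind_eq_flatMap, List.range_succ_eq_map,
    List.flatMap_cons, List.flatMap_map, List.map_cons, List.map_flatMap, List.map_append,
    List.map_singleton, List.prod_cons, List.prod_append, List.singleton_append, List.map_nil]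
  congr 1
  · congr 1; push_cast; ring_nf

set_option maxHeartbeats 4000000 in
/-- Fibonacci Hamiltonian (`α = (√5−1)/2`, Fibonacci denominators `q_6 = 13`, `q_7 = 21`):
explicit trace polynomials at energy `0` and the resulting trace condition for
`λ > (3+√3)/6`. -/
theorem stmt16 (lam : ℝ) :
    (sturmianM lam ((Real.sqrt 5 - 1) / 2) 0 13).trace = lam * (18 * lam ^ 2 - 8) ∧
    (sturmianM lam ((Real.sqrt 5 - 1) / 2) 0 21).trace
      = lam * (-108 * lam ^ 4 + 84 * lam ^ 2 - 13) ∧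
    ((3 + Real.sqrt 3) / 6 < lam →
      2 < (sturmianM lam ((Real.sqrt 5 - 1) / 2) 0 13).trace ∧
      (sturmianM lam ((Real.sqrt 5 - 1) / 2) 0 21).trace < -2) := by
  set A : ℝ := (Real.sqrt 5 - 1) / 2 with hA
  have s5 : Real.sqrt 5 ^ 2 = 5 := Real.sq_sqrt (by norm_num)
  have hl : (2.236:ℝ) < Real.sqrt 5 := by nlinarith [Real.sqrt_nonneg 5]
  have hu : Real.sqrt 5 < 2.2361 := by nlinarith [Real.sqrt_nonneg 5]
  have h1 : sturmianT lam A 0 1 = !![-lam, -1; 1, 0] := by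
    refine sT_one lam A 1 0 ?_ ?_ ?_ <;> (push_cast; rw [hA]; linarith)
  have h2 : sturmianT lam A 0 2 = !![(0:ℝ), -1; 1, 0] := by
    refine sT_zero lam A 2 1 ?_ ?_ ?_ <;> (push_cast; rw [hA]; linarith)
  have h3 : sturmianT lam A 0 3 = !![-lam, -1; 1, 0] := by
    refine sT_one lam A 3 1 ?_ ?_ ?_ <;> (push_cast; rw [hA]; linarith)
  have h4 : sturmianT lam A 0 4 = !![-lam, -1; 1, 0] := by
    refine sT_one lam A 4 2 ?_ ?_ ?_ <;> (push_cast; rw [hA]; linarith)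
  have h5 : sturmianT lam A 0 5 = !![(0:ℝ), -1; 1, 0] := by
    refine sT_zero lam A 5 3 ?_ ?_ ?_ <;> (push_cast; rw [hA]; linarith)
  have h6 : sturmianT lam A 0 6 = !![-lam, -1; 1, 0] := by
    refine sT_one lam A 6 3 ?_ ?_ ?_ <;> (push_cast; rw [hA]; linarith)
  have h7 : sturmianT lam A 0 7 = !![(0:ℝ), -1; 1, 0] := by
    refine sT_zero lam A 7 4 ?_ ?_ ?_ <;> (push_cast; rw [hA]; linarith)
  have h8 : sturmianT lam A 0 8 = !![-lam, -1; 1, 0] := by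
    refine sT_one lam A 8 4 ?_ ?_ ?_ <;> (push_cast; rw [hA]; linarith)
  have h9 : sturmianT lam A 0 9 = !![-lam, -1; 1, 0] := by
    refine sT_one lam A 9 5 ?_ ?_ ?_ <;> (push_cast; rw [hA]; linarith)
  have h10 : sturmianT lam A 0 10 = !![(0:ℝ), -1; 1, 0] := by
    refine sT_zero lam A 10 6 ?_ ?_ ?_ <;> (push_cast; rw [hA]; linarith)
  have h11 : sturmianT lam A 0 11 = !![-lam, -1; 1, 0] := by
    refine sT_one lam A 11 6 ?_ ?_ ?_ <;> (push_cast; rw [hA]; linarith)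
  have h12 : sturmianT lam A 0 12 = !![-lam, -1; 1, 0] := by
    refine sT_one lam A 12 7 ?_ ?_ ?_ <;> (push_cast; rw [hA]; linarith)
  have h13 : sturmianT lam A 0 13 = !![(0:ℝ), -1; 1, 0] := by
    refine sT_zero lam A 13 8 ?_ ?_ ?_ <;> (push_cast; rw [hA]; linarith)
  have h14 : sturmianT lam A 0 14 = !![-lam, -1; 1, 0] := by
    refine sT_one lam A 14 8 ?_ ?_ ?_ <;> (push_cast; rw [hA]; linarith)
  have h15 : sturmianT lam A 0 15 = !![(0:ℝ), -1; 1, 0] := by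
    refine sT_zero lam A 15 9 ?_ ?_ ?_ <;> (push_cast; rw [hA]; linarith)
  have h16 : sturmianT lam A 0 16 = !![-lam, -1; 1, 0] := by
    refine sT_one lam A 16 9 ?_ ?_ ?_ <;> (push_cast; rw [hA]; linarith)
  have h17 : sturmianT lam A 0 17 = !![-lam, -1; 1, 0] := by
    refine sT_one lam A 17 10 ?_ ?_ ?_ <;> (push_cast; rw [hA]; linarith)
  have h18 : sturmianT lam A 0 18 = !![(0:ℝ), -1; 1, 0] := by
    refine sT_zero lam A 18 11 ?_ ?_ ?_ <;> (push_cast; rw [hA]; linarith)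
  have h19 : sturmianT lam A 0 19 = !![-lam, -1; 1, 0] := by
    refine sT_one lam A 19 11 ?_ ?_ ?_ <;> (push_cast; rw [hA]; linarith)
  have h20 : sturmianT lam A 0 20 = !![(0:ℝ), -1; 1, 0] := by
    refine sT_zero lam A 20 12 ?_ ?_ ?_ <;> (push_cast; rw [hA]; linarith)
  have h21 : sturmianT lam A 0 21 = !![-lam, -1; 1, 0] := by
    refine sT_one lam A 21 12 ?_ ?_ ?_ <;> (push_cast; rw [hA]; linarith)
  have m0 : sturmianM lam A 0 0 = 1 := by simp [sturmianM]
  have m1 : sturmianM lam A 0 1 = !![((-1)*lam : ℝ), ((-1) : ℝ); ((1) : ℝ), (0:ℝ)] := by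
    have e := sturmianM_succ lam A 0 0
    norm_num at e
    rw [e, m0, mul_one, h1]
    exact m2_ext (by ring) (by ring) (by ring) (by ring)
  have m2 : sturmianM lam A 0 2 = !![((-1) : ℝ), (0:ℝ); ((-1)*lam : ℝ), ((-1) : ℝ)] := by
    have e := sturmianM_succ lam A 0 1
    norm_num at e
    rw [e, h2, m1, Matrix.mul_fin_two]
    exact m2_ext (by ring) (by ring) (by ring) (by ring)
  have m3 : sturmianM lam A 0 3 = !![((2)*lam : ℝ), ((1) : ℝ); ((-1) : ℝ), (0:ℝ)] := by
    have e := sturmianM_succ lam A 0 2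
    norm_num at e
    rw [e, h3, m2, Matrix.mul_fin_two]
    exact m2_ext (by ring) (by ring) (by ring) (by ring)
  have m4 : sturmianM lam A 0 4 = !![((-2)*lam^2 + (1) : ℝ), ((-1)*lam : ℝ); ((2)*lam : ℝ), ((1) : ℝ)] := by
    have e := sturmianM_succ lam A 0 3
    norm_num at e
    rw [e, h4, m3, Matrix.mul_fin_two]
    exact m2_ext (by ring) (by ring) (by ring) (by ring)
  have m5 : sturmianM lam A 0 5 = !![((-2)*lam : ℝ), ((-1) : ℝ); ((-2)*lam^2 + (1) : ℝ), ((-1)*lam : ℝ)] := by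
    have e := sturmianM_succ lam A 0 4
    norm_num at e
    rw [e, h5, m4, Matrix.mul_fin_two]
    exact m2_ext (by ring) (by ring) (by ring) (by ring)
  have m6 : sturmianM lam A 0 6 = !![((4)*lam^2 + (-1) : ℝ), ((2)*lam : ℝ); ((-2)*lam : ℝ), ((-1) : ℝ)] := by
    have e := sturmianM_succ lam A 0 5
    norm_num at e
    rw [e, h6, m5, Matrix.mul_fin_two]
    exact m2_ext (by ring) (by ring) (by ring) (by ring)
  have m7 : sturmianM lam A 0 7 = !![((2)*lam : ℝ), ((1) : ℝ); ((4)*lam^2 + (-1) : ℝ), ((2)*lam : ℝ)] := by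
    have e := sturmianM_succ lam A 0 6
    norm_num at e
    rw [e, h7, m6, Matrix.mul_fin_two]
    exact m2_ext (by ring) (by ring) (by ring) (by ring)
  have m8 : sturmianM lam A 0 8 = !![((-6)*lam^2 + (1) : ℝ), ((-3)*lam : ℝ); ((2)*lam : ℝ), ((1) : ℝ)] := by
    have e := sturmianM_succ lam A 0 7
    norm_num at e
    rw [e, h8, m7, Matrix.mul_fin_two]
    exact m2_ext (by ring) (by ring) (by ring) (by ring)
  have m9 : sturmianM lam A 0 9 = !![((6)*lam^3 + (-3)*lam : ℝ), ((3)*lam^2 + (-1) : ℝ); ((-6)*lam^2 + (1) : ℝ), ((-3)*lam : ℝ)] := by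
    have e := sturmianM_succ lam A 0 8
    norm_num at e
    rw [e, h9, m8, Matrix.mul_fin_two]
    exact m2_ext (by ring) (by ring) (by ring) (by ring)
  have m10 : sturmianM lam A 0 10 = !![((6)*lam^2 + (-1) : ℝ), ((3)*lam : ℝ); ((6)*lam^3 + (-3)*lam : ℝ), ((3)*lam^2 + (-1) : ℝ)] := by
    have e := sturmianM_succ lam A 0 9
    norm_num at e
    rw [e, h10, m9, Matrix.mul_fin_two]
    exact m2_ext (by ring) (by ring) (by ring) (by ring)
  have m11 : sturmianM lam A 0 11 = !![((-12)*lam^3 + (4)*lam : ℝ), ((-6)*lam^2 + (1) : ℝ); ((6)*lam^2 + (-1) : ℝ), ((3)*lam : ℝ)] := by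
    have e := sturmianM_succ lam A 0 10
    norm_num at e
    rw [e, h11, m10, Matrix.mul_fin_two]
    exact m2_ext (by ring) (by ring) (by ring) (by ring)
  have m12 : sturmianM lam A 0 12 = !![((12)*lam^4 + (-10)*lam^2 + (1) : ℝ), ((6)*lam^3 + (-4)*lam : ℝ); ((-12)*lam^3 + (4)*lam : ℝ), ((-6)*lam^2 + (1) : ℝ)] := by
    have e := sturmianM_succ lam A 0 11
    norm_num at e
    rw [e, h12, m11, Matrix.mul_fin_two]
    exact m2_ext (by ring) (by ring) (by ring) (by ring)
  have m13 : sturmianM lam A 0 13 = !![((12)*lam^3 + (-4)*lam : ℝ), ((6)*lam^2 + (-1) : ℝ); ((12)*lam^4 + (-10)*lam^2 + (1) : ℝ), ((6)*lam^3 + (-4)*lam : ℝ)] := by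
    have e := sturmianM_succ lam A 0 12
    norm_num at e
    rw [e, h13, m12, Matrix.mul_fin_two]
    exact m2_ext (by ring) (by ring) (by ring) (by ring)
  have m14 : sturmianM lam A 0 14 = !![((-24)*lam^4 + (14)*lam^2 + (-1) : ℝ), ((-12)*lam^3 + (5)*lam : ℝ); ((12)*lam^3 + (-4)*lam : ℝ), ((6)*lam^2 + (-1) : ℝ)] := by
    have e := sturmianM_succ lam A 0 13
    norm_num at e
    rw [e, h14, m13, Matrix.mul_fin_two]
    exact m2_ext (by ring) (by ring) (by ring) (by ring)
  have m15 : sturmianM lam A 0 15 = !![((-12)*lam^3 + (4)*lam : ℝ), ((-6)*lam^2 + (1) : ℝ); ((-24)*lam^4 + (14)*lam^2 + (-1) : ℝ), ((-12)*lam^3 + (5)*lam : ℝ)] := by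
    have e := sturmianM_succ lam A 0 14
    norm_num at e
    rw [e, h15, m14, Matrix.mul_fin_two]
    exact m2_ext (by ring) (by ring) (by ring) (by ring)
  have m16 : sturmianM lam A 0 16 = !![((36)*lam^4 + (-18)*lam^2 + (1) : ℝ), ((18)*lam^3 + (-6)*lam : ℝ); ((-12)*lam^3 + (4)*lam : ℝ), ((-6)*lam^2 + (1) : ℝ)] := by
    have e := sturmianM_succ lam A 0 15
    norm_num at e
    rw [e, h16, m15, Matrix.mul_fin_two]
    exact m2_ext (by ring) (by ring) (by ring) (by ring)
  have m17 : sturmianM lam A 0 17 = !![((-36)*lam^5 + (30)*lam^3 + (-5)*lam : ℝ), ((-18)*lam^4 + (12)*lam^2 + (-1) : ℝ); ((36)*lam^4 + (-18)*lam^2 + (1) : ℝ), ((18)*lam^3 + (-6)*lam : ℝ)] := by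
    have e := sturmianM_succ lam A 0 16
    norm_num at e
    rw [e, h17, m16, Matrix.mul_fin_two]
    exact m2_ext (by ring) (by ring) (by ring) (by ring)
  have m18 : sturmianM lam A 0 18 = !![((-36)*lam^4 + (18)*lam^2 + (-1) : ℝ), ((-18)*lam^3 + (6)*lam : ℝ); ((-36)*lam^5 + (30)*lam^3 + (-5)*lam : ℝ), ((-18)*lam^4 + (12)*lam^2 + (-1) : ℝ)] := by
    have e := sturmianM_succ lam A 0 17
    norm_num at e
    rw [e, h18, m17, Matrix.mul_fin_two]
    exact m2_ext (by ring) (by ring) (by ring) (by ring)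
  have m19 : sturmianM lam A 0 19 = !![((72)*lam^5 + (-48)*lam^3 + (6)*lam : ℝ), ((36)*lam^4 + (-18)*lam^2 + (1) : ℝ); ((-36)*lam^4 + (18)*lam^2 + (-1) : ℝ), ((-18)*lam^3 + (6)*lam : ℝ)] := by
    have e := sturmianM_succ lam A 0 18
    norm_num at e
    rw [e, h19, m18, Matrix.mul_fin_two]
    exact m2_ext (by ring) (by ring) (by ring) (by ring)
  have m20 : sturmianM lam A 0 20 = !![((36)*lam^4 + (-18)*lam^2 + (1) : ℝ), ((18)*lam^3 + (-6)*lam : ℝ); ((72)*lam^5 + (-48)*lam^3 + (6)*lam : ℝ), ((36)*lam^4 + (-18)*lam^2 + (1) : ℝ)] := by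
    have e := sturmianM_succ lam A 0 19
    norm_num at e
    rw [e, h20, m19, Matrix.mul_fin_two]
    exact m2_ext (by ring) (by ring) (by ring) (by ring)
  have m21 : sturmianM lam A 0 21 = !![((-108)*lam^5 + (66)*lam^3 + (-7)*lam : ℝ), ((-54)*lam^4 + (24)*lam^2 + (-1) : ℝ); ((36)*lam^4 + (-18)*lam^2 + (1) : ℝ), ((18)*lam^3 + (-6)*lam : ℝ)] := by
    have e := sturmianM_succ lam A 0 20
    norm_num at e
    rw [e, h21, m20, Matrix.mul_fin_two]
    exact m2_ext (by ring) (by ring) (by ring) (by ring)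
  have t13 : (sturmianM lam A 0 13).trace = lam * (18 * lam ^ 2 - 8) := by
    rw [m13, Matrix.trace_fin_two_of]; ring
  have t21 : (sturmianM lam A 0 21).trace = lam * (-108 * lam ^ 4 + 84 * lam ^ 2 - 13) := by
    rw [m21, Matrix.trace_fin_two_of]; ring
  refine ⟨t13, t21, fun hlam => ?_⟩
  have s3 : Real.sqrt 3 ^ 2 = 3 := Real.sq_sqrt (by norm_num)
  have h3l : (1.732:ℝ) < Real.sqrt 3 := by nlinarith [Real.sqrt_nonneg 3]
  have h3u : Real.sqrt 3 < 1.7321 := by nlinarith [Real.sqrt_nonneg 3]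
  have hlow : (0.788:ℝ) < lam := by linarith
  constructor
  · rw [t13]
    have hc : (0:ℝ) < lam - 0.788 := by linarith
    nlinarith [mul_pos (mul_pos hc hc) hc, mul_pos hc hc]
  · rw [t21]
    have ha : 0 < lam - (3 + Real.sqrt 3) / 6 := by linarith
    have hb : 0 < lam - (3 - Real.sqrt 3) / 6 := by nlinarith
    have hf : 0 < 6 * lam ^ 2 - 6 * lam + 1 := by nlinarith [mul_pos ha hb]
    have hc : (0:ℝ) < lam - 0.788 := by linarith
    have hg : 0 < 18 * lam ^ 3 + 18 * lam ^ 2 + lam - 2 := by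
      nlinarith [mul_pos hc hc, sq_nonneg lam]
    nlinarith [mul_pos hf hg]
end
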